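/- arXiv:math/0512007 — 7 statements merged into one kernel-verified Lean document; each statement's English description precedes it below -/
import Mathlib

section
/- (Fixed point alternative) Let (E,d) be a complete generalized metric space and J : E → E a strict contraction with Lipschitz constant L < 1. Then for each x ∈ E, either d(Jⁿx, J^{n+1}x) = ∞ for all n ≥ 0, or there exists n₀ such that d(Jⁿx, J^{n+1}x) < ∞ for all n ≥ n₀, the sequence (Jⁿx) converges to a fixed point y* of J, y* is the unique fixed point of J in Y₀ = {y ∈ E : d(J^{n₀}x, y) < ∞}, and d(y, y*) ≤ (1/(1−L)) d(y, Jy) for all y ∈ Y₀. -/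
/-!
Once a single step `d (Jⁿ⁰ x) (Jⁿ⁰⁺¹ x)` is finite, all later steps are bounded by the geometric
sequence `Lᵏ d (Jⁿ⁰ x) (Jⁿ⁰⁺¹ x)`, so the orbit is Cauchy and converges to a fixed point `y*`
(Banach's argument in the extended metric space). For `y` at finite distance from `y*`, the
inequality `d y y* ≤ d y (J y) + L d y y*` can be solved for `d y y*`, which gives the estimate,
and for a fixed point `y` it forces `y = y*`.
-/

open scoped ENNReal NNReal Topology
open Filter Function

noncomputable abbrev EMetricSpace.ofEDist {α : Type*} (d : α → α → ℝ≥0∞)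
    (hd0 : ∀ x y, d x y = 0 ↔ x = y)
    (hcomm : ∀ x y, d x y = d y x) (htri : ∀ x y z, d x z ≤ d x y + d y z) :
    EMetricSpace α where
  edist := d
  edist_self x := (hd0 x x).2 rfl
  edist_comm := hcomm
  edist_triangle := htri
  eq_of_edist_eq_zero h := (hd0 _ _).1 h

theorem EMetric.completeSpace_of_cauchy_tendsto {α : Type*} [PseudoEMetricSpace α]
    (h : ∀ u : ℕ → α, (∀ ε > 0, ∃ N, ∀ m ≥ N, ∀ n ≥ N, edist (u m) (u n) < ε) →
      ∃ a, ∀ ε > 0, ∃ N, ∀ n ≥ N, edist (u n) a < ε) :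
    CompleteSpace α :=
  EMetric.complete_of_cauchySeq_tendsto fun u hu ↦
    (h u (EMetric.cauchySeq_iff.1 hu)).imp fun _ ↦ EMetric.tendsto_atTop.2

theorem LipschitzWith.edist_iterate_succ_ne_top {α : Type*} [PseudoEMetricSpace α] {K : ℝ≥0}
    {f : α → α} (hf : LipschitzWith K f) {x : α} (hx : edist x (f x) ≠ ∞) (n : ℕ) :
    edist (f^[n] x) (f^[n + 1] x) ≠ ∞ :=
  ne_top_of_le_ne_top (ENNReal.mul_ne_top hx (ENNReal.pow_ne_top ENNReal.coe_ne_top))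
    (hf.edist_iterate_succ_le_geometric x n)

namespace ContractingWith

variable {α : Type*} [EMetricSpace α] [CompleteSpace α] {K : ℝ≥0} {f : α → α}
  (hf : ContractingWith K f) {x : α} (hx : edist x (f x) ≠ ∞) {z : α}

theorem edist_efixedPoint_ne_top_of_edist_ne_top (hz : edist x z ≠ ∞) :
    edist z (efixedPoint f hf x hx) ≠ ∞ :=
  ne_top_of_le_ne_top (ENNReal.add_ne_top.2 ⟨hz, (hf.edist_efixedPoint_lt_top hx).ne⟩)
    (edist_triangle_left _ _ x)

theorem eq_efixedPoint_of_edist_ne_top (hfix : IsFixedPt f z) (hz : edist x z ≠ ∞) :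
    z = efixedPoint f hf x hx :=
  (hf.eq_or_edist_eq_top_of_fixedPoints hfix (hf.efixedPoint_isFixedPt hx)).resolve_right
    (hf.edist_efixedPoint_ne_top_of_edist_ne_top hx hz)

theorem edist_efixedPoint_le_of_edist_ne_top (hz : edist x z ≠ ∞) :
    edist z (efixedPoint f hf x hx) ≤ edist z (f z) / (1 - K) :=
  hf.edist_le_of_fixedPoint (hf.edist_efixedPoint_ne_top_of_edist_ne_top hx hz)
    (hf.efixedPoint_isFixedPt hx)

end ContractingWith

theorem ContractingWith.fixedPoint_alternative {α : Type*} [EMetricSpace α] [CompleteSpace α]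
    {K : ℝ≥0} {f : α → α} (hf : ContractingWith K f) (x : α) :
    (∀ n, edist (f^[n] x) (f^[n + 1] x) = ∞) ∨
    ∃ n₀, (∀ n ≥ n₀, edist (f^[n] x) (f^[n + 1] x) < ∞) ∧
      ∃ y, IsFixedPt f y ∧ Tendsto (fun n ↦ f^[n] x) atTop (𝓝 y) ∧
        (∀ z, IsFixedPt f z → edist (f^[n₀] x) z < ∞ → z = y) ∧
        ∀ z, edist (f^[n₀] x) z < ∞ → edist z y ≤ edist z (f z) / (1 - K) := by
  refine or_iff_not_imp_left.2 fun h ↦ ?_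
  obtain ⟨n₀, hn₀⟩ := not_forall.1 h
  rw [iterate_succ_apply'] at hn₀
  refine ⟨n₀, fun n hn ↦ ?_, efixedPoint f hf _ hn₀, hf.efixedPoint_isFixedPt hn₀, ?_,
    fun z hfix hz ↦ hf.eq_efixedPoint_of_edist_ne_top hn₀ hfix hz.ne,
    fun z hz ↦ hf.edist_efixedPoint_le_of_edist_ne_top hn₀ hz.ne⟩
  · obtain ⟨k, rfl⟩ := Nat.exists_eq_add_of_le' hn
    simpa only [iterate_add_apply, Nat.add_right_comm k n₀ 1, lt_top_iff_ne_top]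
      using hf.toLipschitzWith.edist_iterate_succ_ne_top hn₀ k
  · refine (tendsto_add_atTop_iff_nat n₀).1 ?_
    simpa only [iterate_add_apply] using hf.tendsto_iterate_efixedPoint hn₀

/-- The fixed point alternative for strict contractions on a complete generalized
metric space. -/
theorem stmt2 {E : Type*} (d : E → E → ℝ≥0∞)
    (hd0 : ∀ x y, d x y = 0 ↔ x = y)
    (hdsymm : ∀ x y, d x y = d y x)
    (hdtri : ∀ x y z, d x z ≤ d x y + d y z)
    (hcomplete : ∀ u : ℕ → E,
      (∀ ε : ℝ≥0∞, 0 < ε → ∃ N, ∀ m ≥ N, ∀ n ≥ N, d (u m) (u n) < ε) →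
      ∃ L, ∀ ε : ℝ≥0∞, 0 < ε → ∃ N, ∀ n ≥ N, d (u n) L < ε)
    (J : E → E) (L : ℝ≥0) (hL : L < 1)
    (hJ : ∀ x y, d (J x) (J y) ≤ (L : ℝ≥0∞) * d x y) (x : E) :
    (∀ n : ℕ, d (J^[n] x) (J^[n+1] x) = ⊤) ∨
    (∃ n₀ : ℕ, (∀ n ≥ n₀, d (J^[n] x) (J^[n+1] x) < ⊤) ∧
      ∃ ystar : E, J ystar = ystar ∧
        (∀ ε : ℝ≥0∞, 0 < ε → ∃ N, ∀ n ≥ N, d (J^[n] x) ystar < ε) ∧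
        (∀ y : E, J y = y → d (J^[n₀] x) y < ⊤ → y = ystar) ∧
        (∀ y : E, d (J^[n₀] x) y < ⊤ →
          d y ystar ≤ ((1 - L : ℝ≥0) : ℝ≥0∞)⁻¹ * d y (J y))) := by
  let _ : EMetricSpace E := .ofEDist d hd0 hdsymm hdtri
  have _ : CompleteSpace E := EMetric.completeSpace_of_cauchy_tendsto hcomplete
  have hcontr : ContractingWith L J := ⟨hL, hJ⟩
  refine (hcontr.fixedPoint_alternative x).imp_right ?_
  rintro ⟨n₀, hfin, y, hfix, htend, huniq, hest⟩
  refine ⟨n₀, hfin, y, hfix, EMetric.tendsto_atTop.1 htend, huniq, fun z hz ↦ ?_⟩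
  rw [ENNReal.coe_sub, ENNReal.coe_one, ← ENNReal.div_eq_inv_mul]
  exact hest z hz
end

section
/- Let ⊥ be symmetric and let Fᵉ, Gᵉ, Lᵉ : X → Y be even functions vanishing at 0 with ‖Fᵉ(x+y) + Gᵉ(x−y) − Lᵉ(x) − Lᵉ(y)‖ ≤ 2ε for all x ⊥ y, where 0 ⊥ x for all x. Then ‖(Fᵉ(x+y) − Fᵉ(x) − Fᵉ(y)) + (Gᵉ(x−y) − Gᵉ(x) − Gᵉ(y))‖ ≤ 6ε for all x ⊥ y. -/
theorem norm_sub₃_le {E : Type*} [SeminormedAddGroup E] (a b c : E) :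
    ‖a - b - c‖ ≤ ‖a‖ + ‖b‖ + ‖c‖ :=
  norm_sub_le_of_le (norm_sub_le a b) le_rfl

theorem stmt8_general {X Y : Type*} [AddCommGroup X] [NormedAddCommGroup Y]
    (perp : X → X → Prop)
    (hsymm : ∀ x y, perp x y → perp y x)
    (hzero : ∀ x, perp 0 x)
    (Fe Ge Le : X → Y) (ε : ℝ)
    (hLe0 : Le 0 = 0)
    (hineq : ∀ x y, perp x y → ‖Fe (x + y) + Ge (x - y) - Le x - Le y‖ ≤ 2 * ε) :
    ∀ x y, perp x y →
      ‖(Fe (x + y) - Fe x - Fe y) + (Ge (x - y) - Ge x - Ge y)‖ ≤ 6 * ε := by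
  have diag : ∀ x, ‖Fe x + Ge x - Le x‖ ≤ 2 * ε := fun x ↦ by
    simpa [hLe0] using hineq x 0 (hsymm _ _ (hzero x))
  intro x y hxy
  calc ‖(Fe (x + y) - Fe x - Fe y) + (Ge (x - y) - Ge x - Ge y)‖
      = ‖(Fe (x + y) + Ge (x - y) - Le x - Le y) - (Fe x + Ge x - Le x)
          - (Fe y + Ge y - Le y)‖ := by congr 1; abel
    _ ≤ ‖Fe (x + y) + Ge (x - y) - Le x - Le y‖ + ‖Fe x + Ge x - Le x‖
          + ‖Fe y + Ge y - Le y‖ := norm_sub₃_le _ _ _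
    _ ≤ 6 * ε := by linarith [hineq x y hxy, diag x, diag y]

/-- Joint quasi-additivity estimate for the even parts. -/
theorem stmt8 {X Y : Type*} [AddCommGroup X] [Module ℝ X] [NormedAddCommGroup Y]
    (perp : X → X → Prop)
    (hsymm : ∀ x y, perp x y → perp y x)
    (hzero : ∀ x, perp 0 x)
    (hhom : ∀ x y, perp x y → ∀ α β : ℝ, perp (α • x) (β • y))
    (Fe Ge Le : X → Y) (ε : ℝ) (hε : 0 ≤ ε)
    (hFeven : ∀ x, Fe (-x) = Fe x) (hGeven : ∀ x, Ge (-x) = Ge x)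
    (hLeven : ∀ x, Le (-x) = Le x)
    (hFe0 : Fe 0 = 0) (hGe0 : Ge 0 = 0) (hLe0 : Le 0 = 0)
    (hineq : ∀ x y, perp x y → ‖Fe (x + y) + Ge (x - y) - Le x - Le y‖ ≤ 2 * ε) :
    ∀ x y, perp x y →
      ‖(Fe (x + y) - Fe x - Fe y) + (Ge (x - y) - Ge x - Ge y)‖ ≤ 6 * ε :=
  stmt8_general perp hsymm hzero Fe Ge Le ε hLe0 hineq
end

section
/- Let X be an orthogonality space and Y a normed space. Suppose Fᵉ, Gᵉ : X → Y are even, vanish at 0, and satisfy ‖(Fᵉ(x+y) − Fᵉ(x) − Fᵉ(y)) + (Gᵉ(x−y) − Gᵉ(x) − Gᵉ(y))‖ ≤ 6ε for all x ⊥ y. Then for every x ∈ X, choosing y₀ with x ⊥ y₀ and x + y₀ ⊥ x − y₀ (guaranteed by O4), one has ‖(Fᵉ(2y₀) − 4Fᵉ(y₀)) + (Gᵉ(2x) − 4Gᵉ(x))‖ ≤ 42ε. -/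
/-- From the joint even-part quasi-additivity one gets the key `42ε` estimate. -/
theorem stmt9 {X Y : Type*} [AddCommGroup X] [Module ℝ X] [NormedAddCommGroup Y]
    [NormedSpace ℝ Y]
    (perp : X → X → Prop)
    (hO1 : ∀ x, perp x 0 ∧ perp 0 x)
    (hO3 : ∀ x y, perp x y → ∀ α β : ℝ, perp (α • x) (β • y))
    (Fe Ge : X → Y) (ε : ℝ) (hε : 0 ≤ ε)
    (hFeven : ∀ x, Fe (-x) = Fe x) (hGeven : ∀ x, Ge (-x) = Ge x)
    (hFe0 : Fe 0 = 0) (hGe0 : Ge 0 = 0)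
    (hineq : ∀ x y, perp x y →
      ‖(Fe (x + y) - Fe x - Fe y) + (Ge (x - y) - Ge x - Ge y)‖ ≤ 6 * ε) :
    ∀ x y₀ : X, perp x y₀ → perp (x + y₀) (x - y₀) →
      ‖(Fe ((2 : ℝ) • y₀) - (4 : ℝ) • Fe y₀) +
        (Ge ((2 : ℝ) • x) - (4 : ℝ) • Ge x)‖ ≤ 42 * ε := by
  intro x y₀ hxy hab
  set u : X := (2⁻¹ : ℝ) • (x + y₀) with hu
  set v : X := (2⁻¹ : ℝ) • (x - y₀) with hv
  -- perpendicularity facts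
  have hxny : perp x (-y₀) := by simpa using hO3 x y₀ hxy 1 (-1)
  have h4p : perp (x + y₀) (-(x - y₀)) := by simpa using hO3 _ _ hab 1 (-1)
  have h5p : perp u v := hO3 _ _ hab _ _
  have h6p : perp u (-v) := by
    have := hO3 _ _ hab (2⁻¹ : ℝ) (-(2⁻¹ : ℝ))
    simpa [hu, hv, neg_smul] using this
  -- the five inequalities
  have h1 := hineq x y₀ hxy
  have h2 := hineq x (-y₀) hxny
  have h4 := hineq (x + y₀) (-(x - y₀)) h4p
  have h5 := hineq u v h5p
  have h6 := hineq u (-v) h6p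
  -- rewrite arguments
  have e2a : x + -y₀ = x - y₀ := by abel
  have e2b : x - -y₀ = x + y₀ := by abel
  rw [e2a, e2b, hFeven, hGeven] at h2
  have e4a : (x + y₀) + -(x - y₀) = (2 : ℝ) • y₀ := by module
  have e4b : (x + y₀) - -(x - y₀) = (2 : ℝ) • x := by module
  rw [e4a, e4b, hFeven, hGeven] at h4
  have e5a : u + v = x := by rw [hu, hv]; module
  have e5b : u - v = y₀ := by rw [hu, hv]; module
  rw [e5a, e5b] at h5
  have e6a : u + -v = y₀ := by rw [hu, hv]; module
  have e6b : u - -v = x := by rw [hu, hv]; module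
  rw [e6a, e6b, hFeven, hGeven] at h6
  -- the key algebraic identity
  set E1 : Y := (Fe (x + y₀) - Fe x - Fe y₀) + (Ge (x - y₀) - Ge x - Ge y₀) with hE1
  set E2 : Y := (Fe (x - y₀) - Fe x - Fe y₀) + (Ge (x + y₀) - Ge x - Ge y₀) with hE2
  set E4 : Y := (Fe ((2 : ℝ) • y₀) - Fe (x + y₀) - Fe (x - y₀)) +
      (Ge ((2 : ℝ) • x) - Ge (x + y₀) - Ge (x - y₀)) with hE4
  set E5 : Y := (Fe x - Fe u - Fe v) + (Ge y₀ - Ge u - Ge v) with hE5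
  set E6 : Y := (Fe y₀ - Fe u - Fe v) + (Ge x - Ge u - Ge v) with hE6
  have key : (Fe ((2 : ℝ) • y₀) - (4 : ℝ) • Fe y₀) +
      (Ge ((2 : ℝ) • x) - (4 : ℝ) • Ge x)
      = E1 + E2 + E4 + (2 : ℝ) • (E5 - E6) := by
    rw [hE1, hE2, hE4, hE5, hE6]; module
  rw [key]
  have t1 : ‖E1 + E2 + E4 + (2 : ℝ) • (E5 - E6)‖ ≤
      ‖E1 + E2 + E4‖ + ‖(2 : ℝ) • (E5 - E6)‖ := norm_add_le _ _
  have t2 : ‖E1 + E2 + E4‖ ≤ ‖E1 + E2‖ + ‖E4‖ := norm_add_le _ _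
  have t3 : ‖E1 + E2‖ ≤ ‖E1‖ + ‖E2‖ := norm_add_le _ _
  have t4 : ‖(2 : ℝ) • (E5 - E6)‖ = 2 * ‖E5 - E6‖ := by
    rw [norm_smul]; norm_num
  have t5 : ‖E5 - E6‖ ≤ ‖E5‖ + ‖E6‖ := norm_sub_le _ _
  nlinarith [h1, h2, h4, h5, h6]
end

section
/- Under the hypotheses of the previous step, together with the additional hypothesis ‖Fᵉ(2x) − 4Fᵉ(x)‖ ≤ ε/2 for all x (which follows from ‖f(2x) − f(−2x) − 4f(x) − 4f(−x)‖ ≤ ε when Fᵉ is the even part of f − f(0)), one has ‖(1/4)Gᵉ(2x) − Gᵉ(x)‖ ≤ 11ε for all x ∈ X. -/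
/-- Adding the hypothesis `‖Fᵉ(2x) − 4Fᵉ(x)‖ ≤ ε/2` yields
`‖(1/4)Gᵉ(2x) − Gᵉ(x)‖ ≤ 11ε`. -/
theorem stmt10 {X Y : Type*} [AddCommGroup X] [Module ℝ X] [NormedAddCommGroup Y]
    [NormedSpace ℝ Y]
    (perp : X → X → Prop)
    (hO1 : ∀ x, perp x 0 ∧ perp 0 x)
    (hO3 : ∀ x y, perp x y → ∀ α β : ℝ, perp (α • x) (β • y))
    (hO4 : ∀ x : X, ∀ lam : ℝ, 0 ≤ lam →
      ∃ y₀ : X, perp x y₀ ∧ perp (x + y₀) (lam • x - y₀))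
    (Fe Ge : X → Y) (ε : ℝ) (hε : 0 ≤ ε)
    (hFeven : ∀ x, Fe (-x) = Fe x) (hGeven : ∀ x, Ge (-x) = Ge x)
    (hFe0 : Fe 0 = 0) (hGe0 : Ge 0 = 0)
    (hineq : ∀ x y, perp x y →
      ‖(Fe (x + y) - Fe x - Fe y) + (Ge (x - y) - Ge x - Ge y)‖ ≤ 6 * ε)
    (hFdbl : ∀ x : X, ‖Fe ((2 : ℝ) • x) - (4 : ℝ) • Fe x‖ ≤ ε / 2) :
    ∀ x : X, ‖(4 : ℝ)⁻¹ • Ge ((2 : ℝ) • x) - Ge x‖ ≤ 11 * ε := by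
  intro x
  obtain ⟨y, hxy, huv'⟩ := hO4 x 1 zero_le_one
  have huv : perp (x + y) (x - y) := by rwa [one_smul] at huv'
  -- h1 : pair (x, y)
  have h1 : ‖(Fe (x + y) - Fe x - Fe y) + (Ge (x - y) - Ge x - Ge y)‖ ≤ 6 * ε :=
    hineq x y hxy
  -- h2 : pair (x, -y)
  have h2 : ‖(Fe (x - y) - Fe x - Fe y) + (Ge (x + y) - Ge x - Ge y)‖ ≤ 6 * ε := by
    have hp : perp x (-y) := by simpa using hO3 x y hxy 1 (-1)
    have h := hineq x (-y) hp
    rwa [show x + -y = x - y by module, show x - -y = x + y by module,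
      hFeven, hGeven] at h
  -- h3 : pair (x+y, -(x-y))
  have h3 : ‖(Fe ((2 : ℝ) • y) - Fe (x + y) - Fe (x - y)) +
      (Ge ((2 : ℝ) • x) - Ge (x + y) - Ge (x - y))‖ ≤ 6 * ε := by
    have hp : perp (x + y) (-(x - y)) := by simpa using hO3 _ _ huv 1 (-1)
    have h := hineq _ _ hp
    rwa [show (x + y) + -(x - y) = (2 : ℝ) • y by module,
      show (x + y) - -(x - y) = (2 : ℝ) • x by module, hFeven, hGeven] at h
  -- h4 : pair (u/2, v/2)
  have h4 : ‖(Fe x - Fe ((2 : ℝ)⁻¹ • (x + y)) - Fe ((2 : ℝ)⁻¹ • (x - y))) +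
      (Ge y - Ge ((2 : ℝ)⁻¹ • (x + y)) - Ge ((2 : ℝ)⁻¹ • (x - y)))‖ ≤ 6 * ε := by
    have hp := hO3 _ _ huv (2 : ℝ)⁻¹ (2 : ℝ)⁻¹
    have h := hineq _ _ hp
    rwa [show (2 : ℝ)⁻¹ • (x + y) + (2 : ℝ)⁻¹ • (x - y) = x by module,
      show (2 : ℝ)⁻¹ • (x + y) - (2 : ℝ)⁻¹ • (x - y) = y by module] at h
  -- h5 : pair (u/2, -v/2)
  have h5 : ‖(Fe y - Fe ((2 : ℝ)⁻¹ • (x + y)) - Fe ((2 : ℝ)⁻¹ • (x - y))) +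
      (Ge x - Ge ((2 : ℝ)⁻¹ • (x + y)) - Ge ((2 : ℝ)⁻¹ • (x - y)))‖ ≤ 6 * ε := by
    have hp : perp ((2 : ℝ)⁻¹ • (x + y)) (-((2 : ℝ)⁻¹ • (x - y))) := by
      have := hO3 _ _ huv (2 : ℝ)⁻¹ (-(2 : ℝ)⁻¹)
      rwa [neg_smul] at this
    have h := hineq _ _ hp
    rwa [show (2 : ℝ)⁻¹ • (x + y) + -((2 : ℝ)⁻¹ • (x - y)) = y by module,
      show (2 : ℝ)⁻¹ • (x + y) - -((2 : ℝ)⁻¹ • (x - y)) = x by module,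
      hFeven, hGeven] at h
  -- h6 : doubling at y
  have h6 : ‖Fe ((2 : ℝ) • y) - (4 : ℝ) • Fe y‖ ≤ ε / 2 := hFdbl y
  -- key algebraic identity
  have key : Ge ((2 : ℝ) • x) - (4 : ℝ) • Ge x =
      ((Fe (x + y) - Fe x - Fe y) + (Ge (x - y) - Ge x - Ge y)) +
      ((Fe (x - y) - Fe x - Fe y) + (Ge (x + y) - Ge x - Ge y)) +
      ((Fe ((2 : ℝ) • y) - Fe (x + y) - Fe (x - y)) +
        (Ge ((2 : ℝ) • x) - Ge (x + y) - Ge (x - y))) +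
      (2 : ℝ) • ((Fe x - Fe ((2 : ℝ)⁻¹ • (x + y)) - Fe ((2 : ℝ)⁻¹ • (x - y))) +
        (Ge y - Ge ((2 : ℝ)⁻¹ • (x + y)) - Ge ((2 : ℝ)⁻¹ • (x - y)))) -
      (2 : ℝ) • ((Fe y - Fe ((2 : ℝ)⁻¹ • (x + y)) - Fe ((2 : ℝ)⁻¹ • (x - y))) +
        (Ge x - Ge ((2 : ℝ)⁻¹ • (x + y)) - Ge ((2 : ℝ)⁻¹ • (x - y)))) -
      (Fe ((2 : ℝ) • y) - (4 : ℝ) • Fe y) := by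
    module
  have big : ‖Ge ((2 : ℝ) • x) - (4 : ℝ) • Ge x‖ ≤ 44 * ε := by
    rw [key]
    have n4 : ‖(2 : ℝ) • ((Fe x - Fe ((2 : ℝ)⁻¹ • (x + y)) - Fe ((2 : ℝ)⁻¹ • (x - y))) +
        (Ge y - Ge ((2 : ℝ)⁻¹ • (x + y)) - Ge ((2 : ℝ)⁻¹ • (x - y))))‖ ≤ 12 * ε := by
      rw [norm_smul]
      simp only [Real.norm_ofNat]
      nlinarith [h4]
    have n5 : ‖(2 : ℝ) • ((Fe y - Fe ((2 : ℝ)⁻¹ • (x + y)) - Fe ((2 : ℝ)⁻¹ • (x - y))) +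
        (Ge x - Ge ((2 : ℝ)⁻¹ • (x + y)) - Ge ((2 : ℝ)⁻¹ • (x - y))))‖ ≤ 12 * ε := by
      rw [norm_smul]
      simp only [Real.norm_ofNat]
      nlinarith [h5]
    calc ‖_ + _ + _ + _ - _ - _‖ ≤ ‖_ + _ + _ + _ - _‖ + ‖_‖ := norm_sub_le _ _
      _ ≤ (‖_ + _ + _ + _‖ + ‖_‖) + ‖_‖ := by gcongr; exact norm_sub_le _ _
      _ ≤ ((‖_ + _ + _‖ + ‖_‖) + ‖_‖) + ‖_‖ := by gcongr; exact norm_add_le _ _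
      _ ≤ (((‖_ + _‖ + ‖_‖) + ‖_‖) + ‖_‖) + ‖_‖ := by gcongr; exact norm_add_le _ _
      _ ≤ ((((‖_‖ + ‖_‖) + ‖_‖) + ‖_‖) + ‖_‖) + ‖_‖ := by gcongr; exact norm_add_le _ _
      _ ≤ 44 * ε := by linarith [h1, h2, h3, n4, n5, h6]
  have e : (4 : ℝ)⁻¹ • Ge ((2 : ℝ) • x) - Ge x =
      (4 : ℝ)⁻¹ • (Ge ((2 : ℝ) • x) - (4 : ℝ) • Ge x) := by module
  rw [e, norm_smul]
  have : ‖(4 : ℝ)⁻¹‖ = (4 : ℝ)⁻¹ := by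
    rw [Real.norm_eq_abs, abs_of_nonneg]; positivity
  rw [this]
  nlinarith [big, norm_nonneg (Ge ((2 : ℝ) • x) - (4 : ℝ) • Ge x)]
end

section
/- Let X be an orthogonality space, Y a Banach space, and ψ : X → Y with ψ(0) = 0 satisfying ‖(1/4)ψ(2x) − ψ(x)‖ ≤ 11ε for all x, and the orthogonal quasi-additivity condition ‖ψ(x+y) − ψ(x) − ψ(y)‖ ≤ Cε for all x ⊥ y, with C a fixed constant. Then S(x) := lim_{n→∞} ψ(2ⁿx)/4ⁿ exists, satisfies S(2x) = 4S(x), S is orthogonally additive, and ‖ψ(x) − S(x)‖ ≤ (44/3)ε for all x. -/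
open Filter

/-- Fixed-point step for the quadratic-type scaling:
`S(x) = lim ψ(2ⁿx)/4ⁿ` exists, `S(2x) = 4S(x)`, `S` is orthogonally additive, and
`‖ψ(x) − S(x)‖ ≤ (44/3)ε`. -/
theorem stmt11 {X Y : Type*} [AddCommGroup X] [Module ℝ X] [NormedAddCommGroup Y]
    [NormedSpace ℝ Y] [CompleteSpace Y]
    (perp : X → X → Prop)
    (hO1 : ∀ x, perp x 0 ∧ perp 0 x)
    (hO3 : ∀ x y, perp x y → ∀ α β : ℝ, perp (α • x) (β • y))
    (hO4 : ∀ x : X, ∀ lam : ℝ, 0 ≤ lam →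
      ∃ y₀ : X, perp x y₀ ∧ perp (x + y₀) (lam • x - y₀))
    (ψ : X → Y) (ε C : ℝ) (hε : 0 ≤ ε) (hψ0 : ψ 0 = 0)
    (hdbl : ∀ x : X, ‖(4 : ℝ)⁻¹ • ψ ((2 : ℝ) • x) - ψ x‖ ≤ 11 * ε)
    (hquasi : ∀ x y, perp x y → ‖ψ (x + y) - ψ x - ψ y‖ ≤ C * ε) :
    ∃ S : X → Y,
      (∀ x : X, Tendsto (fun n : ℕ => ((4 : ℝ) ^ n)⁻¹ • ψ (((2 : ℝ) ^ n) • x))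
        atTop (nhds (S x))) ∧
      (∀ x, S ((2 : ℝ) • x) = (4 : ℝ) • S x) ∧
      (∀ x y, perp x y → S (x + y) = S x + S y) ∧
      (∀ x, ‖ψ x - S x‖ ≤ (44 / 3) * ε) := by
  set f : X → ℕ → Y := fun x n => ((4 : ℝ) ^ n)⁻¹ • ψ (((2 : ℝ) ^ n) • x) with hf
  have hstep : ∀ x n, dist (f x n) (f x (n + 1)) ≤ (11 * ε) * (1 / 4 : ℝ) ^ n := by
    intro x n
    have h := hdbl (((2 : ℝ) ^ n) • x)
    have key : f x (n + 1) - f x n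
        = ((4 : ℝ) ^ n)⁻¹ • ((4 : ℝ)⁻¹ • ψ ((2 : ℝ) • ((2 : ℝ) ^ n) • x)
          - ψ (((2 : ℝ) ^ n) • x)) := by
      simp only [hf, smul_sub, smul_smul, pow_succ]
      ring_nf
    rw [dist_comm, dist_eq_norm, key, norm_smul]
    have h4 : ‖(((4 : ℝ) ^ n)⁻¹ : ℝ)‖ = (1 / 4 : ℝ) ^ n := by
      rw [norm_inv, norm_pow, Real.norm_ofNat, one_div, inv_pow]
    rw [h4, mul_comm]
    exact mul_le_mul_of_nonneg_right h (by positivity)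
  have hcauchy : ∀ x, CauchySeq (f x) := fun x =>
    cauchySeq_of_le_geometric (1 / 4) (11 * ε) (by norm_num) (hstep x)
  choose S hS using fun x => cauchySeq_tendsto_of_complete (hcauchy x)
  refine ⟨S, hS, ?_, ?_, ?_⟩
  · intro x
    have h1 : Tendsto (fun n => f x (n + 1)) atTop (nhds (S x)) :=
      (hS x).comp (tendsto_add_atTop_nat 1)
    have h2 : Tendsto (fun n => (4 : ℝ)⁻¹ • f ((2 : ℝ) • x) n) atTop
        (nhds ((4 : ℝ)⁻¹ • S ((2 : ℝ) • x))) := (hS _).const_smul _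
    have heq : (fun n => f x (n + 1)) = fun n => (4 : ℝ)⁻¹ • f ((2 : ℝ) • x) n := by
      funext n
      simp only [hf, smul_smul, pow_succ]
      ring_nf
    rw [heq] at h1
    have := tendsto_nhds_unique h1 h2
    rw [this]
    rw [smul_smul]
    norm_num
  · intro x y hxy
    have hg : Tendsto (fun n => f x n + f y n) atTop (nhds (S x + S y)) :=
      (hS x).add (hS y)
    have hd : Tendsto (fun n => f (x + y) n - (f x n + f y n)) atTop (nhds 0) := by
      apply squeeze_zero_norm (a := fun n : ℕ => |C * ε| * (1 / 4 : ℝ) ^ n) ?_ ?_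
      · intro n
        have hperp := hO3 x y hxy ((2 : ℝ) ^ n) ((2 : ℝ) ^ n)
        have h := hquasi _ _ hperp
        have key : f (x + y) n - (f x n + f y n)
            = ((4 : ℝ) ^ n)⁻¹ • (ψ (((2 : ℝ) ^ n) • x + ((2 : ℝ) ^ n) • y)
              - ψ (((2 : ℝ) ^ n) • x) - ψ (((2 : ℝ) ^ n) • y)) := by
          simp only [hf, smul_add, smul_sub]
          abel
        rw [key, norm_smul, norm_inv, norm_pow, Real.norm_ofNat]
        calc ((4 : ℝ) ^ n)⁻¹ * ‖_‖ ≤ ((4 : ℝ) ^ n)⁻¹ * |C * ε| :=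
              mul_le_mul_of_nonneg_left (h.trans (le_abs_self _)) (by positivity)
          _ = |C * ε| * (1 / 4 : ℝ) ^ n := by rw [mul_comm, one_div, inv_pow]
      · have : Tendsto (fun n : ℕ => (1 / 4 : ℝ) ^ n) atTop (nhds 0) :=
          tendsto_pow_atTop_nhds_zero_of_lt_one (by norm_num) (by norm_num)
        simpa using this.const_mul (|C * ε|)
    have : Tendsto (f (x + y)) atTop (nhds (S x + S y)) := by
      have := hd.add hg
      simpa using this
    exact tendsto_nhds_unique (hS _) this
  · intro x
    have h := dist_le_of_le_geometric_of_tendsto₀ (1 / 4) (11 * ε) (by norm_num)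
      (hstep x) (hS x)
    have hf0 : f x 0 = ψ x := by simp [hf]
    rw [hf0, dist_eq_norm] at h
    calc ‖ψ x - S x‖ ≤ 11 * ε / (1 - 1 / 4) := h
      _ = (44 / 3) * ε := by ring
end

section
/- (Main theorem, sufficiency) Let X be a real orthogonality space with symmetric orthogonality ⊥ and Y a Banach space. Suppose f, g, h, k : X → Y satisfy ‖f(x+y) + g(x−y) − h(x) − k(y)‖ ≤ ε for all x ⊥ y and ‖f(2x) − f(−2x) − 4f(x) − 4f(−x)‖ ≤ ε for all x ∈ X. Then there exist orthogonally additive mappings T, T', T'' : X → Y such that ‖f(x) − f(0) − T(x)‖ ≤ (140/3)ε, ‖g(x) − g(0) − T'(x)‖ ≤ (98/3)ε, and ‖h(x) + k(x) − h(0) − k(0) − T''(x)‖ ≤ (256/3)ε for all x ∈ X. -/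
open Filter Topology

private lemma smb {Y : Type*} [SeminormedAddCommGroup Y] [NormedSpace ℝ Y]
    {c β : ℝ} {v : Y} (hc : 0 ≤ c) (h : ‖v‖ ≤ β) : ‖c • v‖ ≤ c * β := by
  rw [norm_smul, Real.norm_eq_abs, abs_of_nonneg hc]
  exact mul_le_mul_of_nonneg_left h hc

section bnd
variable {Y : Type*} [SeminormedAddCommGroup Y] {A B C D E F G H : Y}
  {a b c d e f g h : ℝ}

private lemma bnd2 (hA : ‖A‖ ≤ a) (hB : ‖B‖ ≤ b) : ‖A + B‖ ≤ a + b :=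
  le_trans (norm_add_le _ _) (add_le_add hA hB)

private lemma bnd3 (hA : ‖A‖ ≤ a) (hB : ‖B‖ ≤ b) (hC : ‖C‖ ≤ c) :
    ‖A + B + C‖ ≤ a + b + c :=
  le_trans (norm_add_le _ _) (add_le_add (bnd2 hA hB) hC)

private lemma bnd4 (hA : ‖A‖ ≤ a) (hB : ‖B‖ ≤ b) (hC : ‖C‖ ≤ c) (hD : ‖D‖ ≤ d) :
    ‖A + B + C + D‖ ≤ a + b + c + d :=
  le_trans (norm_add_le _ _) (add_le_add (bnd3 hA hB hC) hD)

private lemma bnd5 (hA : ‖A‖ ≤ a) (hB : ‖B‖ ≤ b) (hC : ‖C‖ ≤ c) (hD : ‖D‖ ≤ d)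
    (hE : ‖E‖ ≤ e) : ‖A + B + C + D + E‖ ≤ a + b + c + d + e :=
  le_trans (norm_add_le _ _) (add_le_add (bnd4 hA hB hC hD) hE)

private lemma bnd6 (hA : ‖A‖ ≤ a) (hB : ‖B‖ ≤ b) (hC : ‖C‖ ≤ c) (hD : ‖D‖ ≤ d)
    (hE : ‖E‖ ≤ e) (hF : ‖F‖ ≤ f) : ‖A + B + C + D + E + F‖ ≤ a + b + c + d + e + f :=
  le_trans (norm_add_le _ _) (add_le_add (bnd5 hA hB hC hD hE) hF)

private lemma bnd8 (hA : ‖A‖ ≤ a) (hB : ‖B‖ ≤ b) (hC : ‖C‖ ≤ c) (hD : ‖D‖ ≤ d)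
    (hE : ‖E‖ ≤ e) (hF : ‖F‖ ≤ f) (hG : ‖G‖ ≤ g) (hH : ‖H‖ ≤ h) :
    ‖A + B + C + D + E + F + G + H‖ ≤ a + b + c + d + e + f + g + h :=
  le_trans (norm_add_le _ _)
    (add_le_add (le_trans (norm_add_le _ _) (add_le_add (bnd6 hA hB hC hD hE hF) hG)) hH)

private lemma nneg {v : Y} {a : ℝ} (h : ‖v‖ ≤ a) : ‖-v‖ ≤ a := by rwa [norm_neg]

end bnd

private lemma hyers {X Y : Type*} [AddCommGroup X] [Module ℝ X]
    [NormedAddCommGroup Y] [NormedSpace ℝ Y] [CompleteSpace Y]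
    (F : X → Y) (r C : ℝ) (hr : 1 < r)
    (hdbl : ∀ x, ‖F ((2:ℝ) • x) - r • F x‖ ≤ C) :
    ∃ L : X → Y, (∀ x, ‖F x - L x‖ ≤ C / (r - 1)) ∧
      (∀ x y : X, ∀ D : ℝ,
        (∀ n : ℕ, ‖F ((2:ℝ)^n • (x + y)) - F ((2:ℝ)^n • x) - F ((2:ℝ)^n • y)‖ ≤ D) →
        L (x + y) = L x + L y) := by
  have hr0 : (0:ℝ) < r := lt_trans one_pos hr
  have hrinv : r⁻¹ < 1 := by rw [inv_lt_one_iff₀]; right; exact hr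
  set u : X → ℕ → Y := fun x n => (r ^ n)⁻¹ • F ((2:ℝ)^n • x) with hu
  have harg : ∀ (x : X) (n : ℕ), (2:ℝ) • ((2:ℝ)^n • x) = (2:ℝ)^(n+1) • x := by
    intro x n; rw [smul_smul, pow_succ]; ring_nf
  have hdist : ∀ x n, dist (u x n) (u x (n+1)) ≤ (C / r) * (r⁻¹) ^ n := by
    intro x n
    rw [dist_eq_norm]
    have e1 : u x n - u x (n+1)
        = (r^(n+1))⁻¹ • (r • F ((2:ℝ)^n • x) - F ((2:ℝ)^(n+1) • x)) := by
      simp only [hu]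
      match_scalars <;> (field_simp; try ring)
    have hC : ‖r • F ((2:ℝ)^n • x) - F ((2:ℝ)^(n+1) • x)‖ ≤ C := by
      rw [← norm_neg, neg_sub, ← harg x n]
      exact hdbl ((2:ℝ)^n • x)
    rw [e1, norm_smul, Real.norm_eq_abs, abs_of_pos (by positivity)]
    calc (r^(n+1))⁻¹ * ‖r • F ((2:ℝ)^n • x) - F ((2:ℝ)^(n+1) • x)‖
        ≤ (r^(n+1))⁻¹ * C := mul_le_mul_of_nonneg_left hC (by positivity)
      _ = (C / r) * (r⁻¹) ^ n := by rw [pow_succ, mul_inv, inv_pow]; ring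
  have hcauchy : ∀ x, CauchySeq (u x) := fun x =>
    cauchySeq_of_le_geometric r⁻¹ (C / r) hrinv (hdist x)
  choose L hL using fun x => cauchySeq_tendsto_of_complete (hcauchy x)
  refine ⟨L, ?_, ?_⟩
  · intro x
    have h0 : u x 0 = F x := by simp [hu]
    have hd := dist_le_of_le_geometric_of_tendsto₀ r⁻¹ (C / r) hrinv (hdist x) (hL x)
    rw [h0, dist_eq_norm] at hd
    calc ‖F x - L x‖ ≤ (C / r) / (1 - r⁻¹) := hd
      _ = C / (r - 1) := by
          rw [div_div]
          congr 1
          field_simp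
  · intro x y D hD
    have hten : Tendsto (fun n => u (x+y) n - u x n - u y n) atTop
        (𝓝 (L (x+y) - L x - L y)) := ((hL (x+y)).sub (hL x)).sub (hL y)
    have hbound : ∀ n : ℕ, ‖u (x+y) n - u x n - u y n‖ ≤ D * (r⁻¹)^n := by
      intro n
      have e2 : u (x+y) n - u x n - u y n
          = (r^n)⁻¹ • (F ((2:ℝ)^n • (x+y)) - F ((2:ℝ)^n • x) - F ((2:ℝ)^n • y)) := by
        simp only [hu, smul_sub]
      rw [e2, norm_smul, Real.norm_eq_abs, abs_of_pos (by positivity)]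
      calc ((r:ℝ)^n)⁻¹ * ‖F ((2:ℝ)^n • (x+y)) - F ((2:ℝ)^n • x) - F ((2:ℝ)^n • y)‖
          ≤ (r^n)⁻¹ * D := mul_le_mul_of_nonneg_left (hD n) (by positivity)
        _ = D * (r⁻¹)^n := by rw [inv_pow]; ring
    have hb : Tendsto (fun n : ℕ => D * (r⁻¹)^n) atTop (𝓝 0) := by
      have := tendsto_pow_atTop_nhds_zero_of_lt_one (by positivity : (0:ℝ) ≤ r⁻¹) hrinv
      simpa using this.const_mul D
    have hzero : Tendsto (fun n => u (x+y) n - u x n - u y n) atTop (𝓝 0) :=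
      squeeze_zero_norm hbound hb
    have h3 := tendsto_nhds_unique hten hzero
    rw [sub_sub, sub_eq_zero] at h3
    exact h3

set_option maxHeartbeats 1000000 in
/-- Main theorem (sufficiency): orthogonal stability of the Pexiderized quadratic
equation `f(x+y) + g(x−y) = h(x) + k(y)` by orthogonally additive mappings. -/
theorem stmt12 {X Y : Type*} [AddCommGroup X] [Module ℝ X] [NormedAddCommGroup Y]
    [NormedSpace ℝ Y] [CompleteSpace Y]
    (perp : X → X → Prop)
    (hsymm : ∀ x y, perp x y → perp y x)
    (hO1 : ∀ x, perp x 0 ∧ perp 0 x)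
    (hO2 : ∀ x y, x ≠ 0 → y ≠ 0 → perp x y → LinearIndependent ℝ ![x, y])
    (hO3 : ∀ x y, perp x y → ∀ α β : ℝ, perp (α • x) (β • y))
    (hO4 : ∀ x : X, ∀ lam : ℝ, 0 ≤ lam →
      ∃ y₀ : X, perp x y₀ ∧ perp (x + y₀) (lam • x - y₀))
    (f g h k : X → Y) (ε : ℝ) (hε : 0 ≤ ε)
    (hineq : ∀ x y, perp x y → ‖f (x + y) + g (x - y) - h x - k y‖ ≤ ε)
    (hf : ∀ x : X, ‖f ((2 : ℝ) • x) - f (-((2 : ℝ) • x)) - (4 : ℝ) • f x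
      - (4 : ℝ) • f (-x)‖ ≤ ε) :
    ∃ T T' T'' : X → Y,
      (∀ x y, perp x y → T (x + y) = T x + T y) ∧
      (∀ x y, perp x y → T' (x + y) = T' x + T' y) ∧
      (∀ x y, perp x y → T'' (x + y) = T'' x + T'' y) ∧
      (∀ x, ‖f x - f 0 - T x‖ ≤ (140 / 3) * ε) ∧
      (∀ x, ‖g x - g 0 - T' x‖ ≤ (98 / 3) * ε) ∧
      (∀ x, ‖h x + k x - h 0 - k 0 - T'' x‖ ≤ (256 / 3) * ε) := by
  classical
  -- odd and even parts
  obtain ⟨fo, hfo⟩ : ∃ F : X → Y, F = fun z => (2⁻¹ : ℝ) • (f z - f (-z)) := ⟨_, rfl⟩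
  obtain ⟨go, hgo⟩ : ∃ F : X → Y, F = fun z => (2⁻¹ : ℝ) • (g z - g (-z)) := ⟨_, rfl⟩
  obtain ⟨ho, hho⟩ : ∃ F : X → Y, F = fun z => (2⁻¹ : ℝ) • (h z - h (-z)) := ⟨_, rfl⟩
  obtain ⟨ko, hko⟩ : ∃ F : X → Y, F = fun z => (2⁻¹ : ℝ) • (k z - k (-z)) := ⟨_, rfl⟩
  obtain ⟨fe, hfe⟩ : ∃ F : X → Y, F = fun z => (2⁻¹ : ℝ) • (f z + f (-z)) := ⟨_, rfl⟩
  obtain ⟨Gh, hGh⟩ : ∃ F : X → Y, F = fun z => (2⁻¹ : ℝ) • (g z + g (-z)) - (h 0 + k 0) := ⟨_, rfl⟩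
  have ho0 : ho 0 = 0 := by simp only [hho]; rw [neg_zero]; module
  have ko0 : ko 0 = 0 := by simp only [hko]; rw [neg_zero]; module
  have ho_neg : ∀ z, ho (-z) = - ho z := by
    intro z; simp only [hho]; rw [neg_neg]; module
  have ko_neg : ∀ z, ko (-z) = - ko z := by
    intro z; simp only [hko]; rw [neg_neg]; module
  have fe_neg : ∀ z, fe (-z) = fe z := by
    intro z; simp only [hfe]; rw [neg_neg]; module
  have Gh_neg : ∀ z, Gh (-z) = Gh z := by
    intro z; simp only [hGh]; rw [neg_neg]; module
  -- the two fundamental odd-part inequalities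
  have PQ : ∀ x y, perp x y →
      ‖fo (x+y) + go (x+y) - ho x - ho y‖ ≤ 2*ε ∧
      ‖fo (x+y) - go (x+y) - ko x - ko y‖ ≤ 2*ε := by
    intro x y hp
    have hp' := hsymm x y hp
    have i1 := hineq x y hp
    have i2 := hineq x (-y) (by simpa using hO3 x y hp 1 (-1))
    rw [show x + -y = x - y by abel, show x - -y = x + y by abel] at i2
    have i3 := hineq (-x) (-y) (by simpa using hO3 x y hp (-1) (-1))
    rw [show -x + -y = -(x+y) by abel, show -x - -y = -(x - y) by abel] at i3
    have i4 := hineq (-x) y (by simpa using hO3 x y hp (-1) 1)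
    rw [show -x + y = -(x-y) by abel, show -x - y = -(x+y) by abel] at i4
    have i5 := hineq y x hp'
    rw [show y + x = x + y by abel, show y - x = -(x-y) by abel] at i5
    have i6 := hineq y (-x) (by simpa using hO3 y x hp' 1 (-1))
    rw [show y + -x = -(x-y) by abel, show y - -x = x + y by abel] at i6
    have i7 := hineq (-y) (-x) (by simpa using hO3 y x hp' (-1) (-1))
    rw [show -y + -x = -(x+y) by abel, show -y - -x = x - y by abel] at i7
    have i8 := hineq (-y) x (by simpa using hO3 y x hp' (-1) 1)
    rw [show -y + x = x - y by abel, show -y - x = -(x+y) by abel] at i8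
    constructor
    · have key : fo (x+y) + go (x+y) - ho x - ho y
          = (4⁻¹:ℝ) • ( (f (x+y) + g (x-y) - h x - k y)
            + (f (x-y) + g (x+y) - h x - k (-y))
            + (-(f (-(x+y)) + g (-(x-y)) - h (-x) - k (-y)))
            + (-(f (-(x-y)) + g (-(x+y)) - h (-x) - k y))
            + (f (x+y) + g (-(x-y)) - h y - k x)
            + (f (-(x-y)) + g (x+y) - h y - k (-x))
            + (-(f (-(x+y)) + g (x-y) - h (-y) - k (-x)))
            + (-(f (x-y) + g (-(x+y)) - h (-y) - k x)) ) := by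
        simp only [hfo, hgo, hho]; module
      rw [key]
      have := smb (by norm_num : (0:ℝ) ≤ 4⁻¹)
        (bnd8 i1 i2 (nneg i3) (nneg i4) i5 i6 (nneg i7) (nneg i8))
      linarith
    · have key : fo (x+y) - go (x+y) - ko x - ko y
          = (4⁻¹:ℝ) • ( (f (x+y) + g (x-y) - h x - k y)
            + (-(f (x-y) + g (x+y) - h x - k (-y)))
            + (-(f (-(x+y)) + g (-(x-y)) - h (-x) - k (-y)))
            + (f (-(x-y)) + g (-(x+y)) - h (-x) - k y)
            + (f (x+y) + g (-(x-y)) - h y - k x)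
            + (-(f (-(x-y)) + g (x+y) - h y - k (-x)))
            + (-(f (-(x+y)) + g (x-y) - h (-y) - k (-x)))
            + (f (x-y) + g (-(x+y)) - h (-y) - k x) ) := by
        simp only [hfo, hgo, hko]; module
      rw [key]
      have := smb (by norm_num : (0:ℝ) ≤ 4⁻¹)
        (bnd8 i1 (nneg i2) (nneg i3) i4 i5 (nneg i6) (nneg i7) i8)
      linarith
  -- consequences at y = 0
  have C1 : ∀ x, ‖fo x + go x - ho x‖ ≤ 2*ε := by
    intro x
    have := (PQ x 0 (hO1 x).1).1
    rwa [add_zero, ho0, sub_zero] at this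
  have C2 : ∀ x, ‖fo x - go x - ko x‖ ≤ 2*ε := by
    intro x
    have := (PQ x 0 (hO1 x).1).2
    rwa [add_zero, ko0, sub_zero] at this
  -- orthogonal Cauchy bounds for ho, ko, fo
  have E1 : ∀ x y, perp x y → ‖ho (x+y) - ho x - ho y‖ ≤ 4*ε := by
    intro x y hp
    have a1 := (PQ x y hp).1
    have a2 := C1 (x+y)
    have key : ho (x+y) - ho x - ho y
        = (fo (x+y) + go (x+y) - ho x - ho y) + (-(fo (x+y) + go (x+y) - ho (x+y))) := by
      module
    rw [key]
    have := bnd2 a1 (nneg a2)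
    linarith
  have E2 : ∀ x y, perp x y → ‖ko (x+y) - ko x - ko y‖ ≤ 4*ε := by
    intro x y hp
    have a1 := (PQ x y hp).2
    have a2 := C2 (x+y)
    have key : ko (x+y) - ko x - ko y
        = (fo (x+y) - go (x+y) - ko x - ko y) + (-(fo (x+y) - go (x+y) - ko (x+y))) := by
      module
    rw [key]
    have := bnd2 a1 (nneg a2)
    linarith
  have J2 : ∀ x y, perp x y → ‖fo (x+y) - fo x - fo y‖ ≤ 6*ε := by
    intro x y hp
    have a1 := (PQ x y hp).1
    have a2 := (PQ x y hp).2
    have key : fo (x+y) - fo x - fo y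
        = (2⁻¹:ℝ) • ( (fo (x+y) + go (x+y) - ho x - ho y)
          + (fo (x+y) - go (x+y) - ko x - ko y)
          + (-(fo x + go x - ho x)) + (-(fo x - go x - ko x))
          + (-(fo y + go y - ho y)) + (-(fo y - go y - ko y)) ) := by
      module
    rw [key]
    have := smb (by norm_num : (0:ℝ) ≤ 2⁻¹)
      (bnd6 a1 a2 (nneg (C1 x)) (nneg (C2 x)) (nneg (C1 y)) (nneg (C2 y)))
    linarith
  -- consequences of the hf condition
  have K1 : ∀ x, ‖fe x - (4⁻¹:ℝ) • fo ((2:ℝ) • x)‖ ≤ ε/8 := by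
    intro x
    have key : fe x - (4⁻¹:ℝ) • fo ((2:ℝ) • x)
        = (-(8⁻¹:ℝ)) • (f ((2:ℝ) • x) - f (-((2:ℝ) • x)) - (4:ℝ) • f x - (4:ℝ) • f (-x)) := by
      simp only [hfe, hfo]; module
    rw [key, norm_smul, Real.norm_eq_abs]
    have h8 : |(-(8⁻¹:ℝ))| = 8⁻¹ := by norm_num
    rw [h8]
    have := hf x
    linarith
  have K2 : ‖f 0‖ ≤ ε/8 := by
    have h0 := hf 0
    rw [smul_zero, neg_zero] at h0
    have key : f 0 = (-(8⁻¹:ℝ)) • (f 0 - f 0 - (4:ℝ) • f 0 - (4:ℝ) • f 0) := by module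
    rw [key, norm_smul, Real.norm_eq_abs]
    have h8 : |(-(8⁻¹:ℝ))| = 8⁻¹ := by norm_num
    rw [h8]
    linarith
  have K3 : ∀ x y, perp x y → ‖fe (x+y) - fe x - fe y‖ ≤ 2*ε := by
    intro x y hp
    have a1 := J2 _ _ (hO3 x y hp 2 2)
    rw [← smul_add] at a1
    have key : fe (x+y) - fe x - fe y
        = (4⁻¹:ℝ) • (fo ((2:ℝ) • (x+y)) - fo ((2:ℝ) • x) - fo ((2:ℝ) • y))
          + (fe (x+y) - (4⁻¹:ℝ) • fo ((2:ℝ) • (x+y)))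
          + (-(fe x - (4⁻¹:ℝ) • fo ((2:ℝ) • x)))
          + (-(fe y - (4⁻¹:ℝ) • fo ((2:ℝ) • y))) := by module
    rw [key]
    have hs := smb (by norm_num : (0:ℝ) ≤ 4⁻¹) a1
    have := bnd4 hs (K1 (x+y)) (nneg (K1 x)) (nneg (K1 y))
    linarith
  -- Cauchy bound for the shifted even part of g
  have M1 : ∀ x y, perp x y → ‖Gh (x+y) - Gh x - Gh y‖ ≤ 5*ε := by
    intro x y hp
    have i2 := hineq x (-y) (by simpa using hO3 x y hp 1 (-1))
    rw [show x + -y = x - y by abel, show x - -y = x + y by abel] at i2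
    have i4 := hineq (-x) y (by simpa using hO3 x y hp (-1) 1)
    rw [show -x + y = -(x-y) by abel, show -x - y = -(x+y) by abel] at i4
    have j1 := hineq x 0 (hO1 x).1
    rw [add_zero, sub_zero] at j1
    have j2 := hineq (-x) 0 (hO1 (-x)).1
    rw [add_zero, sub_zero] at j2
    have j3 := hineq 0 y (hO1 y).2
    rw [zero_add, zero_sub] at j3
    have j4 := hineq 0 (-y) (hO1 (-y)).2
    rw [zero_add, zero_sub, neg_neg] at j4
    have kk := K3 x (-y) (by simpa using hO3 x y hp 1 (-1))
    rw [show x + -y = x - y by abel, fe_neg] at kk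
    have key : Gh (x+y) - Gh x - Gh y
        = (2⁻¹:ℝ) • ( (f (x-y) + g (x+y) - h x - k (-y))
          + (f (-(x-y)) + g (-(x+y)) - h (-x) - k y)
          + (-(f x + g x - h x - k 0))
          + (-(f (-x) + g (-x) - h (-x) - k 0))
          + (-(f y + g (-y) - h 0 - k y))
          + (-(f (-y) + g y - h 0 - k (-y))) )
          + (-(fe (x-y) - fe x - fe y)) := by
      simp only [hGh, hfe]; module
    rw [key]
    have hs := smb (by norm_num : (0:ℝ) ≤ 2⁻¹)
      (bnd6 i2 i4 (nneg j1) (nneg j2) (nneg j3) (nneg j4))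
    have := bnd2 hs (nneg kk)
    linarith
  -- doubling estimates
  have hodbl : ∀ x : X, ‖ho ((2:ℝ) • x) - (2:ℝ) • ho x‖ ≤ 12*ε := by
    intro x
    obtain ⟨y₀, hp1, hp2⟩ := hO4 x 1 zero_le_one
    rw [one_smul] at hp2
    have d1 := E1 (x+y₀) (x-y₀) hp2
    rw [show (x+y₀) + (x-y₀) = (2:ℝ) • x by module] at d1
    have d2 := E1 x y₀ hp1
    have d3 := E1 x (-y₀) (by simpa using hO3 x y₀ hp1 1 (-1))
    rw [show x + -y₀ = x - y₀ by abel, ho_neg] at d3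
    have key : ho ((2:ℝ) • x) - (2:ℝ) • ho x
        = (ho ((2:ℝ) • x) - ho (x+y₀) - ho (x-y₀))
          + (ho (x+y₀) - ho x - ho y₀)
          + (ho (x-y₀) - ho x - -ho y₀) := by module
    rw [key]
    have := bnd3 d1 d2 d3
    linarith
  have hkdbl : ∀ x : X, ‖ko ((2:ℝ) • x) - (2:ℝ) • ko x‖ ≤ 12*ε := by
    intro x
    obtain ⟨y₀, hp1, hp2⟩ := hO4 x 1 zero_le_one
    rw [one_smul] at hp2
    have d1 := E2 (x+y₀) (x-y₀) hp2
    rw [show (x+y₀) + (x-y₀) = (2:ℝ) • x by module] at d1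
    have d2 := E2 x y₀ hp1
    have d3 := E2 x (-y₀) (by simpa using hO3 x y₀ hp1 1 (-1))
    rw [show x + -y₀ = x - y₀ by abel, ko_neg] at d3
    have key : ko ((2:ℝ) • x) - (2:ℝ) • ko x
        = (ko ((2:ℝ) • x) - ko (x+y₀) - ko (x-y₀))
          + (ko (x+y₀) - ko x - ko y₀)
          + (ko (x-y₀) - ko x - -ko y₀) := by module
    rw [key]
    have := bnd3 d1 d2 d3
    linarith
  have hGdbl : ∀ x : X, ‖Gh ((2:ℝ) • x) - (4:ℝ) • Gh x‖ ≤ 35*ε := by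
    intro x
    obtain ⟨y₀, hp1, hp2⟩ := hO4 x 1 zero_le_one
    rw [one_smul] at hp2
    have c1 := M1 (x+y₀) (x-y₀) hp2
    rw [show (x+y₀) + (x-y₀) = (2:ℝ) • x by module] at c1
    have c2 := M1 x y₀ hp1
    have c3 := M1 x (-y₀) (by simpa using hO3 x y₀ hp1 1 (-1))
    rw [show x + -y₀ = x - y₀ by abel, Gh_neg] at c3
    have c4 := M1 ((2⁻¹:ℝ) • (x+y₀)) ((2⁻¹:ℝ) • (x-y₀)) (hO3 _ _ hp2 2⁻¹ 2⁻¹)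
    rw [show (2⁻¹:ℝ) • (x+y₀) + (2⁻¹:ℝ) • (x-y₀) = x by module] at c4
    have hp5 : perp ((2⁻¹:ℝ) • (x+y₀)) (-((2⁻¹:ℝ) • (x-y₀))) := by
      have := hO3 _ _ hp2 2⁻¹ (-2⁻¹)
      rwa [show ((-2⁻¹:ℝ)) • (x-y₀) = -((2⁻¹:ℝ) • (x-y₀)) by module] at this
    have c5 := M1 ((2⁻¹:ℝ) • (x+y₀)) (-((2⁻¹:ℝ) • (x-y₀))) hp5
    rw [show (2⁻¹:ℝ) • (x+y₀) + -((2⁻¹:ℝ) • (x-y₀)) = y₀ by module, Gh_neg] at c5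
    have key : Gh ((2:ℝ) • x) - (4:ℝ) • Gh x
        = (Gh ((2:ℝ) • x) - Gh (x+y₀) - Gh (x-y₀))
          + (Gh (x+y₀) - Gh x - Gh y₀)
          + (Gh (x-y₀) - Gh x - Gh y₀)
          + (2:ℝ) • (Gh y₀ - Gh ((2⁻¹:ℝ) • (x+y₀)) - Gh ((2⁻¹:ℝ) • (x-y₀)))
          + (2:ℝ) • (-(Gh x - Gh ((2⁻¹:ℝ) • (x+y₀)) - Gh ((2⁻¹:ℝ) • (x-y₀)))) := by
      module
    rw [key]
    have s4 := smb (by norm_num : (0:ℝ) ≤ 2) c5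
    have s5 := smb (by norm_num : (0:ℝ) ≤ 2) (nneg c4)
    have := bnd5 c1 c2 c3 s4 s5
    linarith
  -- Hyers limits
  obtain ⟨ah, ah_close', ah_add⟩ := hyers ho 2 (12*ε) one_lt_two hodbl
  obtain ⟨ak, ak_close', ak_add⟩ := hyers ko 2 (12*ε) one_lt_two hkdbl
  obtain ⟨bb, bb_close', bb_add⟩ := hyers Gh 4 (35*ε) (by norm_num) hGdbl
  have ah_close : ∀ z, ‖ho z - ah z‖ ≤ 12*ε := by
    intro z; have := ah_close' z; norm_num at this; linarith
  have ak_close : ∀ z, ‖ko z - ak z‖ ≤ 12*ε := by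
    intro z; have := ak_close' z; norm_num at this; linarith
  have bb_close : ∀ z, ‖Gh z - bb z‖ ≤ 35/3*ε := by
    intro z; have := bb_close' z; norm_num at this; linarith
  have ah_oadd : ∀ x y, perp x y → ah (x+y) = ah x + ah y := by
    intro x y hp
    refine ah_add x y (4*ε) (fun n => ?_)
    have := E1 _ _ (hO3 x y hp ((2:ℝ)^n) ((2:ℝ)^n))
    rwa [← smul_add] at this
  have ak_oadd : ∀ x y, perp x y → ak (x+y) = ak x + ak y := by
    intro x y hp
    refine ak_add x y (4*ε) (fun n => ?_)
    have := E2 _ _ (hO3 x y hp ((2:ℝ)^n) ((2:ℝ)^n))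
    rwa [← smul_add] at this
  have bb_oadd : ∀ x y, perp x y → bb (x+y) = bb x + bb y := by
    intro x y hp
    refine bb_add x y (5*ε) (fun n => ?_)
    have := M1 _ _ (hO3 x y hp ((2:ℝ)^n) ((2:ℝ)^n))
    rwa [← smul_add] at this
  -- odd-part approximations
  have J1f : ∀ z, ‖fo z - (2⁻¹:ℝ) • (ah z + ak z)‖ ≤ 14*ε := by
    intro z
    have key : fo z - (2⁻¹:ℝ) • (ah z + ak z)
        = (2⁻¹:ℝ) • ( (fo z + go z - ho z) + (fo z - go z - ko z)
            + (ho z - ah z) + (ko z - ak z) ) := by module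
    rw [key]
    have := smb (by norm_num : (0:ℝ) ≤ 2⁻¹)
      (bnd4 (C1 z) (C2 z) (ah_close z) (ak_close z))
    linarith
  have J1g : ∀ z, ‖go z - (2⁻¹:ℝ) • (ah z - ak z)‖ ≤ 14*ε := by
    intro z
    have key : go z - (2⁻¹:ℝ) • (ah z - ak z)
        = (2⁻¹:ℝ) • ( (fo z + go z - ho z) + (-(fo z - go z - ko z))
            + (ho z - ah z) + (-(ko z - ak z)) ) := by module
    rw [key]
    have := smb (by norm_num : (0:ℝ) ≤ 2⁻¹)
      (bnd4 (C1 z) (nneg (C2 z)) (ah_close z) (nneg (ak_close z)))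
    linarith
  have Gh0 : ‖Gh 0‖ ≤ 9/8*ε := by
    have i00 := hineq 0 0 (hO1 0).1
    rw [add_zero, sub_zero] at i00
    have key : Gh 0 = (f 0 + g 0 - h 0 - k 0) + (-(f 0)) := by
      simp only [hGh]; rw [neg_zero]; module
    rw [key]
    have := bnd2 i00 (nneg K2)
    linarith
  -- assemble
  refine ⟨fun x => (2⁻¹:ℝ) • (ah x + ak x) + (8⁻¹:ℝ) • (ah ((2:ℝ) • x) + ak ((2:ℝ) • x)),
    fun x => (2⁻¹:ℝ) • (ah x - ak x) + bb x,
    fun x => (ah x + ak x) + (4⁻¹:ℝ) • (ah ((2:ℝ) • x) + ak ((2:ℝ) • x)) + (2:ℝ) • bb x,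
    ?_, ?_, ?_, ?_, ?_, ?_⟩
  · intro x y hp
    have hp2 := hO3 x y hp 2 2
    have e1 := ah_oadd x y hp
    have e2 := ak_oadd x y hp
    have e3 := ah_oadd _ _ hp2
    have e4 := ak_oadd _ _ hp2
    dsimp only
    rw [smul_add (2:ℝ) x y, e1, e2, e3, e4]
    module
  · intro x y hp
    have e1 := ah_oadd x y hp
    have e2 := ak_oadd x y hp
    have e5 := bb_oadd x y hp
    dsimp only
    rw [e1, e2, e5]
    module
  · intro x y hp
    have hp2 := hO3 x y hp 2 2
    have e1 := ah_oadd x y hp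
    have e2 := ak_oadd x y hp
    have e3 := ah_oadd _ _ hp2
    have e4 := ak_oadd _ _ hp2
    have e5 := bb_oadd x y hp
    dsimp only
    rw [smul_add (2:ℝ) x y, e1, e2, e3, e4, e5]
    module
  · intro x
    dsimp only
    have key : f x - f 0 - ((2⁻¹:ℝ) • (ah x + ak x) + (8⁻¹:ℝ) • (ah ((2:ℝ) • x) + ak ((2:ℝ) • x)))
        = (fo x - (2⁻¹:ℝ) • (ah x + ak x))
          + (fe x - (4⁻¹:ℝ) • fo ((2:ℝ) • x))
          + (4⁻¹:ℝ) • (fo ((2:ℝ) • x) - (2⁻¹:ℝ) • (ah ((2:ℝ) • x) + ak ((2:ℝ) • x)))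
          + (-(f 0)) := by
      simp only [hfo, hfe]; module
    rw [key]
    have hs := smb (by norm_num : (0:ℝ) ≤ 4⁻¹) (J1f ((2:ℝ) • x))
    have := bnd4 (J1f x) (K1 x) hs (nneg K2)
    linarith
  · intro x
    dsimp only
    have key : g x - g 0 - ((2⁻¹:ℝ) • (ah x - ak x) + bb x)
        = (go x - (2⁻¹:ℝ) • (ah x - ak x)) + (Gh x - bb x) + (-(Gh 0)) := by
      simp only [hgo, hGh]; rw [neg_zero]; module
    rw [key]
    have := bnd3 (J1g x) (bb_close x) (nneg Gh0)
    linarith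
  · intro x
    dsimp only
    have j1 := hineq x 0 (hO1 x).1
    rw [add_zero, sub_zero] at j1
    have j3 := hineq 0 x (hO1 x).2
    rw [zero_add, zero_sub] at j3
    have key : h x + k x - h 0 - k 0
          - ((ah x + ak x) + (4⁻¹:ℝ) • (ah ((2:ℝ) • x) + ak ((2:ℝ) • x)) + (2:ℝ) • bb x)
        = (2:ℝ) • (fo x - (2⁻¹:ℝ) • (ah x + ak x))
          + (2:ℝ) • (fe x - (4⁻¹:ℝ) • fo ((2:ℝ) • x))
          + (2⁻¹:ℝ) • (fo ((2:ℝ) • x) - (2⁻¹:ℝ) • (ah ((2:ℝ) • x) + ak ((2:ℝ) • x)))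
          + (2:ℝ) • (Gh x - bb x)
          + (-(f x + g x - h x - k 0))
          + (-(f x + g (-x) - h 0 - k x)) := by
      simp only [hfo, hfe, hGh]; module
    rw [key]
    have s1 := smb (by norm_num : (0:ℝ) ≤ 2) (J1f x)
    have s2 := smb (by norm_num : (0:ℝ) ≤ 2) (K1 x)
    have s3 := smb (by norm_num : (0:ℝ) ≤ 2⁻¹) (J1f ((2:ℝ) • x))
    have s4 := smb (by norm_num : (0:ℝ) ≤ 2) (bb_close x)
    have := bnd6 s1 s2 s3 s4 (nneg j1) (nneg j3)
    linarith
end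

section
/- (Pexiderized Cauchy equation, orthogonal stability) Let X be a real orthogonality space with symmetric ⊥ and Y a Banach space. If f, h, k : X → Y satisfy ‖f(x+y) − h(x) − k(y)‖ ≤ ε for all x ⊥ y, then there exists a unique orthogonally additive mapping T : X → Y such that ‖f(x) − f(0) − T(x)‖ ≤ 32ε and ‖h(x) + k(x) − h(0) − k(0) − 2T(x)‖ ≤ 72ε for all x ∈ X. -/
/-!
Put `F x = f x - f 0`. The instances `(x, y)`, `(x, 0)`, `(0, y)`, `(0, 0)` of the hypothesis give
`‖F (x + y) - F x - F y‖ ≤ 4ε` for `x ⊥ y`, and the odd and even parts of `F` inherit this. Axiom O4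
with `λ = 1` gives, for every `x`, some `y` with `x ⊥ y` and `x + y ⊥ x - y`; evaluating the
approximate additivity on the rhombus `x, y, x + y, x - y` shows that the odd part `g` satisfies
`‖g (2x) - 2 g x‖ ≤ 3δ` and the even part `‖g (2x) - 4 g x‖ ≤ 7δ`. Hyers' sequences
`2⁻ⁿ g (2ⁿ x)` and `4⁻ⁿ g (2ⁿ x)` then converge to orthogonally additive maps within `3δ` and
`7δ / 3` of the two parts, so their sum `T` is within `16δ / 3 = 64ε / 3` of `F`. Uniqueness is the
case `δ = 0`: a bounded orthogonally additive map has bounded, exactly homogeneous odd and even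
parts, whose Hyers limits are both the part itself and `0`.
-/

open Filter Topology

section

variable {X Y : Type*} [AddCommGroup X] [NormedAddCommGroup Y]

def ApproxOrthAdditive (perp : X → X → Prop) (δ : ℝ) (g : X → Y) : Prop :=
  ∀ x y, perp x y → ‖g (x + y) - g x - g y‖ ≤ δ

lemma approxOrthAdditive_zero {perp : X → X → Prop} {T : X → Y}
    (hT : ∀ x y, perp x y → T (x + y) = T x + T y) : ApproxOrthAdditive perp 0 T := by
  intro x y hxy
  simp [hT x y hxy]

section Parts

variable [NormedSpace ℝ Y]

noncomputable def oddPart (g : X → Y) (x : X) : Y := (2⁻¹ : ℝ) • (g x - g (-x))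

noncomputable def evenPart (g : X → Y) (x : X) : Y := (2⁻¹ : ℝ) • (g x + g (-x))

variable {perp : X → X → Prop} {δ : ℝ} {g : X → Y}

lemma oddPart_add_evenPart (g : X → Y) (x : X) : oddPart g x + evenPart g x = g x := by
  simp only [oddPart, evenPart]
  module

lemma odd_oddPart (g : X → Y) : (oddPart g).Odd := fun x => by
  simp only [oddPart, neg_neg]
  module

lemma even_evenPart (g : X → Y) : (evenPart g).Even := fun x => by
  simp only [evenPart, neg_neg]
  module

lemma norm_oddPart_le {M : ℝ} (hg : ∀ x, ‖g x‖ ≤ M) (x : X) : ‖oddPart g x‖ ≤ M := by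
  rw [oddPart, norm_smul, Real.norm_of_nonneg (by norm_num)]
  linarith [norm_sub_le_of_le (hg x) (hg (-x))]

lemma norm_evenPart_le {M : ℝ} (hg : ∀ x, ‖g x‖ ≤ M) (x : X) : ‖evenPart g x‖ ≤ M := by
  rw [evenPart, norm_smul, Real.norm_of_nonneg (by norm_num)]
  linarith [norm_add_le_of_le (hg x) (hg (-x))]

lemma ApproxOrthAdditive.oddPart [Module ℝ X]
    (hhom : ∀ x y, perp x y → ∀ α β : ℝ, perp (α • x) (β • y)) (hg : ApproxOrthAdditive perp δ g) :
    ApproxOrthAdditive perp δ (oddPart g) := by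
  intro x y hxy
  have hneg : perp (-x) (-y) := by simpa using hhom x y hxy (-1) (-1)
  have e : _root_.oddPart g (x + y) - _root_.oddPart g x - _root_.oddPart g y =
      (2⁻¹ : ℝ) • ((g (x + y) - g x - g y) - (g (-x + -y) - g (-x) - g (-y))) := by
    simp only [_root_.oddPart, neg_add]
    module
  rw [e, norm_smul, Real.norm_of_nonneg (by norm_num)]
  linarith [norm_sub_le_of_le (hg x y hxy) (hg _ _ hneg)]

lemma ApproxOrthAdditive.evenPart [Module ℝ X]
    (hhom : ∀ x y, perp x y → ∀ α β : ℝ, perp (α • x) (β • y)) (hg : ApproxOrthAdditive perp δ g) :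
    ApproxOrthAdditive perp δ (evenPart g) := by
  intro x y hxy
  have hneg : perp (-x) (-y) := by simpa using hhom x y hxy (-1) (-1)
  have e : _root_.evenPart g (x + y) - _root_.evenPart g x - _root_.evenPart g y =
      (2⁻¹ : ℝ) • ((g (x + y) - g x - g y) + (g (-x + -y) - g (-x) - g (-y))) := by
    simp only [_root_.evenPart, neg_add]
    module
  rw [e, norm_smul, Real.norm_of_nonneg (by norm_num)]
  linarith [norm_add_le_of_le (hg x y hxy) (hg _ _ hneg)]

end Parts

section Doubling

variable [Module ℝ X] {perp : X → X → Prop} {δ : ℝ} {g : X → Y}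

lemma ApproxOrthAdditive.norm_map_two_smul_sub_map_two_smul_le
    (hhom : ∀ x y, perp x y → ∀ α β : ℝ, perp (α • x) (β • y)) (hg : ApproxOrthAdditive perp δ g)
    (heven : g.Even) {x y : X} (hdiag : perp (x + y) (x - y)) :
    ‖g ((2 : ℝ) • y) - g ((2 : ℝ) • x)‖ ≤ 2 * δ := by
  have hdiag' : perp (x + y) (-(x - y)) := by simpa using hhom _ _ hdiag 1 (-1)
  have e : g ((2 : ℝ) • y) - g ((2 : ℝ) • x) =
      (g (x + y + -(x - y)) - g (x + y) - g (-(x - y))) -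
        (g (x + y + (x - y)) - g (x + y) - g (x - y)) := by
    rw [show x + y + -(x - y) = (2 : ℝ) • y by module,
      show x + y + (x - y) = (2 : ℝ) • x by module, heven]
    abel
  rw [e]
  linarith [norm_sub_le_of_le (hg _ _ hdiag') (hg _ _ hdiag)]

variable [NormedSpace ℝ Y]

lemma ApproxOrthAdditive.norm_map_two_smul_sub_le
    (hhom : ∀ x y, perp x y → ∀ α β : ℝ, perp (α • x) (β • y)) (hg : ApproxOrthAdditive perp δ g)
    {x y : X} (hxy : perp x y) (hdiag : perp (x + y) (x - y)) :
    ‖g ((2 : ℝ) • x) - (2 : ℝ) • g x - (g y + g (-y))‖ ≤ 3 * δ := by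
  have hxy' : perp x (-y) := by simpa using hhom x y hxy 1 (-1)
  have e : g ((2 : ℝ) • x) - (2 : ℝ) • g x - (g y + g (-y)) =
      (g (x + y + (x - y)) - g (x + y) - g (x - y)) + (g (x + y) - g x - g y) +
        (g (x + -y) - g x - g (-y)) := by
    rw [show x + y + (x - y) = (2 : ℝ) • x by module, ← sub_eq_add_neg]
    module
  rw [e]
  linarith [norm_add₃_le.trans (add_le_add_three (hg _ _ hdiag) (hg _ _ hxy) (hg _ _ hxy'))]

lemma ApproxOrthAdditive.norm_odd_map_two_smul_sub_le
    (hhom : ∀ x y, perp x y → ∀ α β : ℝ, perp (α • x) (β • y))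
    (hrhombus : ∀ x, ∃ y, perp x y ∧ perp (x + y) (x - y))
    (hg : ApproxOrthAdditive perp δ g) (hodd : g.Odd) (x : X) :
    ‖g ((2 : ℝ) • x) - (2 : ℝ) • g x‖ ≤ 3 * δ := by
  obtain ⟨y, hxy, hdiag⟩ := hrhombus x
  simpa [hodd y] using hg.norm_map_two_smul_sub_le hhom hxy hdiag

lemma ApproxOrthAdditive.norm_even_map_two_smul_sub_le
    (hhom : ∀ x y, perp x y → ∀ α β : ℝ, perp (α • x) (β • y))
    (hrhombus : ∀ x, ∃ y, perp x y ∧ perp (x + y) (x - y))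
    (hg : ApproxOrthAdditive perp δ g) (heven : g.Even) (z : X) :
    ‖g ((2 : ℝ) • z) - (4 : ℝ) • g z‖ ≤ 7 * δ := by
  obtain ⟨y, hxy, hdiag⟩ := hrhombus ((2 : ℝ)⁻¹ • z)
  have hdiag₂ : perp (z + (2 : ℝ) • y) (z - (2 : ℝ) • y) := by
    simpa [smul_add, smul_sub] using hhom _ _ hdiag 2 2
  have h₁ := hg.norm_map_two_smul_sub_le hhom (by simpa using hhom _ _ hxy 2 2) hdiag₂
  have h₂ := hg.norm_map_two_smul_sub_map_two_smul_le hhom heven hdiag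
  rw [heven, ← two_smul ℝ (g _)] at h₁
  rw [smul_inv_smul₀ two_ne_zero] at h₂
  have e : g ((2 : ℝ) • z) - (4 : ℝ) • g z =
      (g ((2 : ℝ) • z) - (2 : ℝ) • g z - (2 : ℝ) • g ((2 : ℝ) • y)) +
        (2 : ℝ) • (g ((2 : ℝ) • y) - g z) := by
    module
  rw [e]
  calc _ ≤ 3 * δ + 2 * (2 * δ) := by
        refine norm_add_le_of_le h₁ ?_
        rw [norm_smul, Real.norm_two]
        gcongr
    _ = 7 * δ := by ring

end Doubling

section Hyers

variable [Module ℝ X] [NormedSpace ℝ Y] {c K : ℝ} {g : X → Y}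

noncomputable def hyersSeq (c : ℝ) (g : X → Y) (x : X) (n : ℕ) : Y :=
  (c ^ n)⁻¹ • g ((2 : ℝ) ^ n • x)

noncomputable def hyersLimit (c : ℝ) (g : X → Y) (x : X) : Y :=
  limUnder atTop (hyersSeq c g x)

lemma dist_hyersSeq_succ_le (hc : 0 < c) (hg : ∀ x, ‖g ((2 : ℝ) • x) - c • g x‖ ≤ K)
    (x : X) (n : ℕ) :
    dist (hyersSeq c g x n) (hyersSeq c g x (n + 1)) ≤ K / c * c⁻¹ ^ n := by
  have hinv : (c ^ n)⁻¹ = (c ^ (n + 1))⁻¹ * c := by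
    rw [pow_succ, mul_inv, inv_mul_cancel_right₀ hc.ne']
  have e : hyersSeq c g x n - hyersSeq c g x (n + 1) =
      -(c ^ (n + 1))⁻¹ • (g ((2 : ℝ) • (2 : ℝ) ^ n • x) - c • g ((2 : ℝ) ^ n • x)) := by
    rw [hyersSeq, hyersSeq, hinv, pow_succ' (2 : ℝ), mul_smul, mul_smul]
    module
  rw [dist_eq_norm, e, norm_smul, norm_neg, Real.norm_of_nonneg (by positivity)]
  calc _ ≤ (c ^ (n + 1))⁻¹ * K := by gcongr; exact hg _
    _ = K / c * c⁻¹ ^ n := by rw [pow_succ', mul_inv, inv_pow]; ring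

lemma tendsto_hyersLimit [CompleteSpace Y] (hc : 1 < c)
    (hg : ∀ x, ‖g ((2 : ℝ) • x) - c • g x‖ ≤ K) (x : X) :
    Tendsto (hyersSeq c g x) atTop (𝓝 (hyersLimit c g x)) :=
  (cauchySeq_of_le_geometric _ _ (inv_lt_one_of_one_lt₀ hc)
    (dist_hyersSeq_succ_le (by linarith) hg x)).tendsto_limUnder

lemma norm_sub_hyersLimit_le [CompleteSpace Y] (hc : 1 < c)
    (hg : ∀ x, ‖g ((2 : ℝ) • x) - c • g x‖ ≤ K) (x : X) :
    ‖g x - hyersLimit c g x‖ ≤ K / (c - 1) := by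
  have h := dist_le_of_le_geometric_of_tendsto₀ _ _ (inv_lt_one_of_one_lt₀ hc)
    (dist_hyersSeq_succ_le (by linarith) hg x) (tendsto_hyersLimit hc hg x)
  rw [dist_eq_norm, show hyersSeq c g x 0 = g x by simp [hyersSeq]] at h
  refine h.trans_eq ?_
  have : c - 1 ≠ 0 := by linarith
  field_simp

lemma tendsto_inv_pow_smul_zero (hc : 1 < c) {v : ℕ → Y} {B : ℝ} (hv : ∀ n, ‖v n‖ ≤ B) :
    Tendsto (fun n => (c ^ n)⁻¹ • v n) atTop (𝓝 0) :=
  (tendsto_inv_atTop_zero.comp (tendsto_pow_atTop_atTop_of_one_lt hc)).zero_smul_isBoundedUnder_le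
    (isBoundedUnder_of ⟨B, hv⟩)

lemma hyersLimit_eq_zero_of_bounded (hc : 1 < c) {M : ℝ} (hb : ∀ x, ‖g x‖ ≤ M) (x : X) :
    hyersLimit c g x = 0 :=
  (tendsto_inv_pow_smul_zero hc fun _ => hb _).limUnder_eq

lemma hyersLimit_add [CompleteSpace Y] {perp : X → X → Prop} {δ : ℝ}
    (hhom : ∀ x y, perp x y → ∀ α β : ℝ, perp (α • x) (β • y)) (hc : 1 < c)
    (hg : ∀ x, ‖g ((2 : ℝ) • x) - c • g x‖ ≤ K) (happrox : ApproxOrthAdditive perp δ g)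
    {x y : X} (hxy : perp x y) :
    hyersLimit c g (x + y) = hyersLimit c g x + hyersLimit c g y := by
  have e : (fun n => hyersSeq c g (x + y) n - hyersSeq c g x n - hyersSeq c g y n) =
      fun n => (c ^ n)⁻¹ •
        (g ((2 : ℝ) ^ n • x + (2 : ℝ) ^ n • y) - g ((2 : ℝ) ^ n • x) - g ((2 : ℝ) ^ n • y)) := by
    simp only [hyersSeq, smul_add, smul_sub]
  have hzero := tendsto_inv_pow_smul_zero hc fun n =>
    happrox _ _ (hhom x y hxy ((2 : ℝ) ^ n) ((2 : ℝ) ^ n))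
  rw [← e] at hzero
  have hlim := ((tendsto_hyersLimit hc hg (x + y)).sub (tendsto_hyersLimit hc hg x)).sub
    (tendsto_hyersLimit hc hg y)
  rw [← sub_eq_zero, ← sub_sub]
  exact tendsto_nhds_unique hlim hzero

end Hyers

section Stability

variable [Module ℝ X] [NormedSpace ℝ Y] [CompleteSpace Y] {perp : X → X → Prop}

theorem exists_orthAdditive_norm_sub_le {δ : ℝ} {g : X → Y}
    (hhom : ∀ x y, perp x y → ∀ α β : ℝ, perp (α • x) (β • y))
    (hrhombus : ∀ x, ∃ y, perp x y ∧ perp (x + y) (x - y)) (hg : ApproxOrthAdditive perp δ g) :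
    ∃ T : X → Y, (∀ x y, perp x y → T (x + y) = T x + T y) ∧
      ∀ x, ‖g x - T x‖ ≤ 16 / 3 * δ := by
  have hodd := (hg.oddPart hhom).norm_odd_map_two_smul_sub_le hhom hrhombus (odd_oddPart g)
  have heven := (hg.evenPart hhom).norm_even_map_two_smul_sub_le hhom hrhombus (even_evenPart g)
  refine ⟨fun x => hyersLimit 2 (oddPart g) x + hyersLimit 4 (evenPart g) x,
    fun x y hxy => ?_, fun x => ?_⟩
  · dsimp only
    rw [hyersLimit_add hhom one_lt_two hodd (hg.oddPart hhom) hxy,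
      hyersLimit_add hhom (by norm_num) heven (hg.evenPart hhom) hxy]
    abel
  · calc ‖g x - (hyersLimit 2 (oddPart g) x + hyersLimit 4 (evenPart g) x)‖
        = ‖(oddPart g x - hyersLimit 2 (oddPart g) x) +
            (evenPart g x - hyersLimit 4 (evenPart g) x)‖ := by
          rw [← oddPart_add_evenPart g x]
          abel_nf
      _ ≤ 3 * δ / (2 - 1) + 7 * δ / (4 - 1) :=
          norm_add_le_of_le (norm_sub_hyersLimit_le one_lt_two hodd x)
            (norm_sub_hyersLimit_le (by norm_num) heven x)
      _ = 16 / 3 * δ := by ring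

theorem eq_zero_of_orthAdditive_of_bounded
    (hhom : ∀ x y, perp x y → ∀ α β : ℝ, perp (α • x) (β • y))
    (hrhombus : ∀ x, ∃ y, perp x y ∧ perp (x + y) (x - y)) {D : X → Y}
    (hD : ∀ x y, perp x y → D (x + y) = D x + D y) {M : ℝ} (hb : ∀ x, ‖D x‖ ≤ M) : D = 0 := by
  have hD₀ := approxOrthAdditive_zero hD
  have hodd : ∀ x, oddPart D x = 0 := fun x => by
    simpa [hyersLimit_eq_zero_of_bounded one_lt_two (norm_oddPart_le hb)] using
      norm_sub_hyersLimit_le one_lt_two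
        ((hD₀.oddPart hhom).norm_odd_map_two_smul_sub_le hhom hrhombus (odd_oddPart D)) x
  have heven : ∀ x, evenPart D x = 0 := fun x => by
    simpa [hyersLimit_eq_zero_of_bounded (by norm_num : (1 : ℝ) < 4) (norm_evenPart_le hb)] using
      norm_sub_hyersLimit_le (by norm_num : (1 : ℝ) < 4)
        ((hD₀.evenPart hhom).norm_even_map_two_smul_sub_le hhom hrhombus (even_evenPart D)) x
  funext x
  rw [← oddPart_add_evenPart D x, hodd, heven, add_zero, Pi.zero_apply]

theorem eq_of_orthAdditive_of_norm_sub_le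
    (hhom : ∀ x y, perp x y → ∀ α β : ℝ, perp (α • x) (β • y))
    (hrhombus : ∀ x, ∃ y, perp x y ∧ perp (x + y) (x - y)) {g T T' : X → Y} {M M' : ℝ}
    (hT : ∀ x y, perp x y → T (x + y) = T x + T y)
    (hT' : ∀ x y, perp x y → T' (x + y) = T' x + T' y)
    (hgT : ∀ x, ‖g x - T x‖ ≤ M) (hgT' : ∀ x, ‖g x - T' x‖ ≤ M') : T = T' := by
  have hD : (fun x => T x - T' x) = 0 := by
    refine eq_zero_of_orthAdditive_of_bounded hhom hrhombus (M := M' + M) (fun x y hxy => ?_)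
      fun x => ?_
    · rw [hT x y hxy, hT' x y hxy]
      abel
    · rw [show T x - T' x = (g x - T' x) - (g x - T x) by abel]
      exact norm_sub_le_of_le (hgT' x) (hgT x)
  funext x
  exact sub_eq_zero.mp (congrFun hD x)

end Stability

section Pexider

variable {perp : X → X → Prop} {f h k : X → Y} {ε : ℝ}

lemma approxOrthAdditive_sub_map_zero_of_pexider (hO1 : ∀ x, perp x 0 ∧ perp 0 x)
    (hineq : ∀ x y, perp x y → ‖f (x + y) - h x - k y‖ ≤ ε) :
    ApproxOrthAdditive perp (4 * ε) (fun x => f x - f 0) := by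
  intro x y hxy
  have e : f (x + y) - f 0 - (f x - f 0) - (f y - f 0) =
      (f (x + y) - h x - k y) - (f (x + 0) - h x - k 0) - (f (0 + y) - h 0 - k y) +
        (f (0 + 0) - h 0 - k 0) := by
    simp only [add_zero, zero_add]
    abel
  rw [e]
  linarith [norm_add_le_of_le (norm_sub_le_of_le (norm_sub_le_of_le (hineq _ _ hxy)
    (hineq _ _ (hO1 x).1)) (hineq _ _ (hO1 y).2)) (hineq _ _ (hO1 0).1)]

lemma norm_pexider_add_sub_le [NormedSpace ℝ Y] (hO1 : ∀ x, perp x 0 ∧ perp 0 x)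
    (hineq : ∀ x y, perp x y → ‖f (x + y) - h x - k y‖ ≤ ε) {T : X → Y} {C : ℝ} {x : X}
    (hx : ‖f x - f 0 - T x‖ ≤ C) :
    ‖h x + k x - h 0 - k 0 - (2 : ℝ) • T x‖ ≤ 4 * ε + 2 * C := by
  have e : h x + k x - h 0 - k 0 - (2 : ℝ) • T x =
      -(f (x + 0) - h x - k 0) + -(f (0 + x) - h 0 - k x) + (2 : ℝ) • (f x - f 0 - T x) +
        (2 : ℝ) • (f (0 + 0) - h 0 - k 0) := by
    simp only [add_zero, zero_add]
    module
  rw [e]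
  refine norm_add₄_le.trans ?_
  rw [norm_neg, norm_neg, norm_smul, norm_smul, Real.norm_two]
  linarith [hineq _ _ (hO1 x).1, hineq _ _ (hO1 x).2, hineq _ _ (hO1 0).1]

end Pexider

end

theorem stmt17_general {X Y : Type*} [AddCommGroup X] [Module ℝ X] [NormedAddCommGroup Y]
    [NormedSpace ℝ Y] [CompleteSpace Y]
    (perp : X → X → Prop)
    (hO1 : ∀ x, perp x 0 ∧ perp 0 x)
    (hO3 : ∀ x y, perp x y → ∀ α β : ℝ, perp (α • x) (β • y))
    (hO4 : ∀ x : X, ∀ lam : ℝ, 0 ≤ lam →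
      ∃ y₀ : X, perp x y₀ ∧ perp (x + y₀) (lam • x - y₀))
    (f h k : X → Y) (ε : ℝ) (hε : 0 ≤ ε)
    (hineq : ∀ x y, perp x y → ‖f (x + y) - h x - k y‖ ≤ ε) :
    ∃! T : X → Y,
      (∀ x y, perp x y → T (x + y) = T x + T y) ∧
      (∀ x, ‖f x - f 0 - T x‖ ≤ 32 * ε) ∧
      (∀ x, ‖h x + k x - h 0 - k 0 - (2 : ℝ) • T x‖ ≤ 72 * ε) := by
  have hrhombus : ∀ x, ∃ y, perp x y ∧ perp (x + y) (x - y) := fun x => by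
    simpa using hO4 x 1 zero_le_one
  obtain ⟨T, hT, hfT⟩ := exists_orthAdditive_norm_sub_le hO3 hrhombus
    (approxOrthAdditive_sub_map_zero_of_pexider hO1 hineq)
  have hfT₃₂ : ∀ x, ‖f x - f 0 - T x‖ ≤ 32 * ε := fun x => (hfT x).trans (by linarith)
  refine ⟨T, ⟨hT, hfT₃₂, fun x => (norm_pexider_add_sub_le hO1 hineq (hfT x)).trans ?_⟩, ?_⟩
  · linarith
  · rintro T' ⟨hT', hfT', -⟩
    exact eq_of_orthAdditive_of_norm_sub_le hO3 hrhombus hT' hT hfT' hfT₃₂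

/-- Orthogonal stability of the Pexiderized Cauchy equation
`f(x+y) = h(x) + k(y)`. -/
theorem stmt17 {X Y : Type*} [AddCommGroup X] [Module ℝ X] [NormedAddCommGroup Y]
    [NormedSpace ℝ Y] [CompleteSpace Y]
    (perp : X → X → Prop)
    (hsymm : ∀ x y, perp x y → perp y x)
    (hO1 : ∀ x, perp x 0 ∧ perp 0 x)
    (hO2 : ∀ x y, x ≠ 0 → y ≠ 0 → perp x y → LinearIndependent ℝ ![x, y])
    (hO3 : ∀ x y, perp x y → ∀ α β : ℝ, perp (α • x) (β • y))
    (hO4 : ∀ x : X, ∀ lam : ℝ, 0 ≤ lam →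
      ∃ y₀ : X, perp x y₀ ∧ perp (x + y₀) (lam • x - y₀))
    (f h k : X → Y) (ε : ℝ) (hε : 0 ≤ ε)
    (hineq : ∀ x y, perp x y → ‖f (x + y) - h x - k y‖ ≤ ε) :
    ∃! T : X → Y,
      (∀ x y, perp x y → T (x + y) = T x + T y) ∧
      (∀ x, ‖f x - f 0 - T x‖ ≤ 32 * ε) ∧
      (∀ x, ‖h x + k x - h 0 - k 0 - (2 : ℝ) • T x‖ ≤ 72 * ε) :=
  stmt17_general perp hO1 hO3 hO4 f h k ε hε hineq
end
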